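/- arXiv:1408.6070 — 2 statements merged into one kernel-verified Lean document; each statement's English description precedes it below -/
import Mathlib

section
/- Suppose P is two-sided and directionally atomless, that b⁺ ≥ (a⁺)² and b⁻ ≥ (a⁻)², and that (ρ'+a⁺, ρ'+a⁻) ≠ (0,0). Fix Y < 0 and define J(u) = E[q] − (E[m])² + γ⁻Y·E[m] for u ∈ ℝⁿ (where Y' = sY + P'u). Then J attains its global minimum on ℝⁿ; a vector u* ∈ ℝⁿ is a global minimizer of J if and only if K* = u*/Y is a global minimizer of F⁻; and the minimum value satisfies min_{u∈ℝⁿ} J(u) = Y²·min_{K∈ℝⁿ} F⁻(K). -/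
/-!
Write `X_K = s + P'K` and `kink c₁ c₂ x = c₁ min(x, 0) + c₂ max(x, 0)`. For `Y < 0` we have
`Y' = Y · X_{u/Y}`, and `Y' ≥ 0` exactly when `X_{u/Y} ≤ 0`, so `m = Y · kink(X)` and
`q = Y² · kinkQuad(X)` with slopes `ρ' + a^±` and quadratic coefficients `ρ'² + 2ρ'a^± + b^±`.
Hence `J(u) = Y² G(u/Y)` for `G(K) = E[kinkQuad(X_K)] - E[kink(X_K)]² + γ⁻ E[kink(X_K)]`
(`kinkMeanVar`), and expanding `G` by linearity of the integral gives exactly `F⁻`. Everything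
therefore reduces to `G` attaining its minimum. It is continuous by dominated convergence, and
coercive: `b^± ≥ (a^±)²` gives `G(K) ≥ Var[kink(X_K)] + γ⁻ E[kink(X_K)]`; shifting by `s` changes
the variance by a bounded amount and the mean grows at most linearly in `‖K‖`; and
`K ↦ Var[kink(P'K)]` is 2-homogeneous, continuous and, since `P'K` is two-sided and atomless,
positive off `0`, hence at least `c‖K‖²`.
-/

open MeasureTheory

/-- The function `F⁻` from the paper, written with expectations as Bochner integrals. -/
noncomputable def Fminus {Ω : Type*} [MeasurableSpace Ω] (ℙ : Measure Ω) {n : ℕ}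
    (P : Ω → EuclideanSpace ℝ (Fin n)) (s ρ' γm ap am bp bm : ℝ)
    (K : EuclideanSpace ℝ (Fin n)) : ℝ :=
  let pk : Ω → ℝ := fun ω => inner ℝ (P ω) K
  let A : ℝ :=
    (∫ ω, ap * (s + pk ω) * (if s + pk ω ≤ 0 then (1:ℝ) else 0) ∂ℙ) +
    (∫ ω, am * (s + pk ω) * (if 0 < s + pk ω then (1:ℝ) else 0) ∂ℙ)
  ρ' ^ 2 * ((∫ ω, (pk ω) ^ 2 ∂ℙ) - (∫ ω, pk ω ∂ℙ) ^ 2) +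
  (∫ ω, (2 * ρ' * ap + bp) * (s + pk ω) ^ 2 * (if s + pk ω ≤ 0 then (1:ℝ) else 0) ∂ℙ) +
  (∫ ω, (2 * ρ' * am + bm) * (s + pk ω) ^ 2 * (if 0 < s + pk ω then (1:ℝ) else 0) ∂ℙ) -
  A ^ 2 - 2 * ρ' * A * (s + ∫ ω, pk ω ∂ℙ) + γm * A +
  ρ' * γm * (s + ∫ ω, pk ω ∂ℙ)

/-- The random variable `m = ρ'Y' + a⁺Y'·1{Y' ≥ 0} + a⁻Y'·1{Y' < 0}`,
where `Y' = sY + P'u`. -/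
noncomputable def mRV {Ω : Type*} {n : ℕ} (P : Ω → EuclideanSpace ℝ (Fin n))
    (s ρ' ap am : ℝ) (Y : ℝ) (u : EuclideanSpace ℝ (Fin n)) (ω : Ω) : ℝ :=
  let Y' : ℝ := s * Y + inner ℝ (P ω) u
  ρ' * Y' + ap * Y' * (if 0 ≤ Y' then (1:ℝ) else 0) +
    am * Y' * (if Y' < 0 then (1:ℝ) else 0)

/-- The random variable `q = ρ'²Y'² + (2ρ'a⁺+b⁺)Y'²·1{Y' ≥ 0} + (2ρ'a⁻+b⁻)Y'²·1{Y' < 0}`,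
where `Y' = sY + P'u`. -/
noncomputable def qRV {Ω : Type*} {n : ℕ} (P : Ω → EuclideanSpace ℝ (Fin n))
    (s ρ' ap am bp bm : ℝ) (Y : ℝ) (u : EuclideanSpace ℝ (Fin n)) (ω : Ω) : ℝ :=
  let Y' : ℝ := s * Y + inner ℝ (P ω) u
  ρ' ^ 2 * Y' ^ 2 + (2 * ρ' * ap + bp) * Y' ^ 2 * (if 0 ≤ Y' then (1:ℝ) else 0) +
    (2 * ρ' * am + bm) * Y' ^ 2 * (if Y' < 0 then (1:ℝ) else 0)

open Filter
open scoped RealInnerProductSpace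

noncomputable def kink (c₁ c₂ x : ℝ) : ℝ := c₁ * min x 0 + c₂ * max x 0

noncomputable def kinkQuad (d₁ d₂ x : ℝ) : ℝ := d₁ * min x 0 ^ 2 + d₂ * max x 0 ^ 2

section Kink

variable {c₁ c₂ d₁ d₂ x : ℝ}

lemma kink_of_nonpos (hx : x ≤ 0) : kink c₁ c₂ x = c₁ * x := by
  simp [kink, hx]

lemma kink_of_nonneg (hx : 0 ≤ x) : kink c₁ c₂ x = c₂ * x := by
  simp [kink, hx]

lemma kinkQuad_of_nonpos (hx : x ≤ 0) : kinkQuad d₁ d₂ x = d₁ * x ^ 2 := by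
  simp [kinkQuad, hx]

lemma kinkQuad_of_nonneg (hx : 0 ≤ x) : kinkQuad d₁ d₂ x = d₂ * x ^ 2 := by
  simp [kinkQuad, hx]

@[fun_prop]
lemma continuous_kink : Continuous (kink c₁ c₂) := by
  unfold kink; fun_prop

@[fun_prop]
lemma continuous_kinkQuad : Continuous (kinkQuad d₁ d₂) := by
  unfold kinkQuad; fun_prop

lemma kink_add (c₁' c₂' : ℝ) :
    kink (c₁ + c₁') (c₂ + c₂') x = kink c₁ c₂ x + kink c₁' c₂' x := by
  unfold kink; ring

lemma kink_self (c : ℝ) : kink c c x = c * x := by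
  rw [kink, ← mul_add, min_add_max, add_zero]

lemma kinkQuad_add (d₁' d₂' : ℝ) :
    kinkQuad (d₁ + d₁') (d₂ + d₂') x = kinkQuad d₁ d₂ x + kinkQuad d₁' d₂' x := by
  unfold kinkQuad; ring

lemma kinkQuad_self (d : ℝ) : kinkQuad d d x = d * x ^ 2 := by
  rcases le_total x 0 with hx | hx
  · rw [kinkQuad_of_nonpos hx]
  · rw [kinkQuad_of_nonneg hx]

lemma kink_zero_right : kink c₁ 0 x = c₁ * x * if x ≤ 0 then 1 else 0 := by
  split_ifs with hx
  · rw [kink_of_nonpos hx, mul_one]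
  · rw [kink_of_nonneg (not_le.1 hx).le]; ring

lemma kink_zero_left : kink 0 c₂ x = c₂ * x * if 0 < x then 1 else 0 := by
  split_ifs with hx
  · rw [kink_of_nonneg hx.le, mul_one]
  · rw [kink_of_nonpos (not_lt.1 hx)]; ring

lemma kinkQuad_zero_right : kinkQuad d₁ 0 x = d₁ * x ^ 2 * if x ≤ 0 then 1 else 0 := by
  split_ifs with hx
  · rw [kinkQuad_of_nonpos hx, mul_one]
  · rw [kinkQuad_of_nonneg (not_le.1 hx).le]; ring

lemma kinkQuad_zero_left : kinkQuad 0 d₂ x = d₂ * x ^ 2 * if 0 < x then 1 else 0 := by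
  split_ifs with hx
  · rw [kinkQuad_of_nonneg hx.le, mul_one]
  · rw [kinkQuad_of_nonpos (not_lt.1 hx)]; ring

lemma kink_sq : kink c₁ c₂ x ^ 2 = kinkQuad (c₁ ^ 2) (c₂ ^ 2) x := by
  rcases le_total x 0 with hx | hx
  · rw [kink_of_nonpos hx, kinkQuad_of_nonpos hx]; ring
  · rw [kink_of_nonneg hx, kinkQuad_of_nonneg hx]; ring

lemma kink_sq_le_kinkQuad (h₁ : c₁ ^ 2 ≤ d₁) (h₂ : c₂ ^ 2 ≤ d₂) :
    kink c₁ c₂ x ^ 2 ≤ kinkQuad d₁ d₂ x := by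
  rw [kink_sq]
  rcases le_total x 0 with hx | hx
  · simp only [kinkQuad_of_nonpos hx]; gcongr
  · simp only [kinkQuad_of_nonneg hx]; gcongr

lemma abs_kink_le : |kink c₁ c₂ x| ≤ (|c₁| + |c₂|) * |x| := by
  rcases le_total x 0 with hx | hx
  · rw [kink_of_nonpos hx, abs_mul]; gcongr; exact le_add_of_nonneg_right (abs_nonneg _)
  · rw [kink_of_nonneg hx, abs_mul]; gcongr; exact le_add_of_nonneg_left (abs_nonneg _)

lemma abs_kinkQuad_le : |kinkQuad d₁ d₂ x| ≤ (|d₁| + |d₂|) * x ^ 2 := by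
  rcases le_total x 0 with hx | hx
  · rw [kinkQuad_of_nonpos hx, abs_mul, abs_sq]; gcongr; exact le_add_of_nonneg_right (abs_nonneg _)
  · rw [kinkQuad_of_nonneg hx, abs_mul, abs_sq]; gcongr; exact le_add_of_nonneg_left (abs_nonneg _)

lemma kink_mul_of_nonneg {t : ℝ} (ht : 0 ≤ t) : kink c₁ c₂ (t * x) = t * kink c₁ c₂ x := by
  rcases le_total x 0 with hx | hx
  · rw [kink_of_nonpos hx, kink_of_nonpos (mul_nonpos_of_nonneg_of_nonpos ht hx)]; ring
  · rw [kink_of_nonneg hx, kink_of_nonneg (mul_nonneg ht hx)]; ring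

lemma abs_kink_sub_kink_le (y : ℝ) :
    |kink c₁ c₂ x - kink c₁ c₂ y| ≤ (|c₁| + |c₂|) * |x - y| := by
  have hmin : |min x 0 - min y 0| ≤ |x - y| := by
    simpa using abs_min_sub_min_le_max x 0 y 0
  have hmax : |max x 0 - max y 0| ≤ |x - y| := abs_max_sub_max_le_abs x y 0
  calc |kink c₁ c₂ x - kink c₁ c₂ y|
      = |c₁ * (min x 0 - min y 0) + c₂ * (max x 0 - max y 0)| := by unfold kink; congr 1; ring
    _ ≤ |c₁| * |min x 0 - min y 0| + |c₂| * |max x 0 - max y 0| := by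
      rw [← abs_mul, ← abs_mul]; exact abs_add_le _ _
    _ ≤ (|c₁| + |c₂|) * |x - y| := by rw [add_mul]; gcongr

end Kink

section RandomVariable

open ProbabilityTheory

variable {Ω : Type*} [MeasurableSpace Ω] {μ : Measure Ω} {X : Ω → ℝ} {c₁ c₂ d₁ d₂ : ℝ}

noncomputable def kinkMeanVar (μ : Measure Ω) (γ c₁ c₂ d₁ d₂ : ℝ) (X : Ω → ℝ) : ℝ :=
  (∫ ω, kinkQuad d₁ d₂ (X ω) ∂μ) - (∫ ω, kink c₁ c₂ (X ω) ∂μ) ^ 2 +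
    γ * ∫ ω, kink c₁ c₂ (X ω) ∂μ

lemma MeasureTheory.MemLp.kink_comp (hX : MemLp X 2 μ) : MemLp (fun ω => kink c₁ c₂ (X ω)) 2 μ :=
  hX.of_le_mul (continuous_kink.comp_aestronglyMeasurable hX.1)
    (ae_of_all _ fun _ => by simpa only [Real.norm_eq_abs] using abs_kink_le)

lemma MeasureTheory.MemLp.integrable_kinkQuad_comp (hX : MemLp X 2 μ) :
    Integrable (fun ω => kinkQuad d₁ d₂ (X ω)) μ :=
  (hX.integrable_sq.const_mul (|d₁| + |d₂|)).mono'
    (continuous_kinkQuad.comp_aestronglyMeasurable hX.1)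
    (ae_of_all _ fun _ => by simpa only [Real.norm_eq_abs] using abs_kinkQuad_le)

lemma variance_add_le_two_mul [IsFiniteMeasure μ] {X Y : Ω → ℝ} (hX : MemLp X 2 μ)
    (hY : MemLp Y 2 μ) : Var[X + Y; μ] ≤ 2 * Var[X; μ] + 2 * Var[Y; μ] := by
  have h := variance_nonneg (X - Y) μ
  rw [variance_sub hX hY] at h
  rw [variance_add hX hY]
  linarith

lemma integral_kink_add_slopes [IsFiniteMeasure μ] (hX : MemLp X 2 μ) (ρ : ℝ) :
    ∫ ω, kink (ρ + c₁) (ρ + c₂) (X ω) ∂μ = ρ * (∫ ω, X ω ∂μ) + ∫ ω, kink c₁ c₂ (X ω) ∂μ := by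
  simp_rw [kink_add, kink_self]
  rw [integral_add ((hX.integrable one_le_two).const_mul ρ) (hX.kink_comp.integrable one_le_two),
    integral_const_mul]

lemma integral_kinkQuad_add_coeffs [IsFiniteMeasure μ] (hX : MemLp X 2 μ) (ρ : ℝ) :
    ∫ ω, kinkQuad (ρ + d₁) (ρ + d₂) (X ω) ∂μ =
      ρ * (∫ ω, X ω ^ 2 ∂μ) + ∫ ω, kinkQuad d₁ d₂ (X ω) ∂μ := by
  simp_rw [kinkQuad_add, kinkQuad_self]
  rw [integral_add (hX.integrable_sq.const_mul ρ) hX.integrable_kinkQuad_comp, integral_const_mul]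

lemma integral_kink_eq_add [IsFiniteMeasure μ] (hX : MemLp X 2 μ) :
    ∫ ω, kink c₁ c₂ (X ω) ∂μ = (∫ ω, kink c₁ 0 (X ω) ∂μ) + ∫ ω, kink 0 c₂ (X ω) ∂μ := by
  rw [← integral_add (hX.kink_comp.integrable one_le_two) (hX.kink_comp.integrable one_le_two)]
  simp_rw [← kink_add, add_zero, zero_add]

lemma integral_kinkQuad_eq_add [IsFiniteMeasure μ] (hX : MemLp X 2 μ) :
    ∫ ω, kinkQuad d₁ d₂ (X ω) ∂μ =
      (∫ ω, kinkQuad d₁ 0 (X ω) ∂μ) + ∫ ω, kinkQuad 0 d₂ (X ω) ∂μ := by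
  rw [← integral_add hX.integrable_kinkQuad_comp hX.integrable_kinkQuad_comp]
  simp_rw [← kinkQuad_add, add_zero, zero_add]

variable [IsProbabilityMeasure μ]

lemma variance_kink_le_variance_kink_const_add (hX : MemLp X 2 μ) (s : ℝ) :
    Var[fun ω => kink c₁ c₂ (X ω); μ] ≤
      2 * Var[fun ω => kink c₁ c₂ (s + X ω); μ] + 2 * ((|c₁| + |c₂|) * |s|) ^ 2 := by
  set M := |c₁| + |c₂|
  have hXs : MemLp (fun ω => s + X ω) 2 μ := (memLp_const s).add hX
  have hshift : MemLp (fun ω => kink c₁ c₂ (s + X ω)) 2 μ := hXs.kink_comp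
  have hdiff : MemLp (fun ω => kink c₁ c₂ (X ω) - kink c₁ c₂ (s + X ω)) 2 μ :=
    hX.kink_comp.sub hshift
  have hbound : Var[fun ω => kink c₁ c₂ (X ω) - kink c₁ c₂ (s + X ω); μ] ≤ (M * |s|) ^ 2 := by
    refine (variance_le_sq_of_bounded (a := -(M * |s|)) (b := M * |s|) (ae_of_all _ fun ω => ?_)
      hdiff.aestronglyMeasurable.aemeasurable).trans_eq (by ring)
    have h := abs_kink_sub_kink_le (c₁ := c₁) (c₂ := c₂) (x := X ω) (s + X ω)
    rw [sub_add_cancel_right, abs_neg] at h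
    exact abs_le.1 h
  calc Var[fun ω => kink c₁ c₂ (X ω); μ]
      = Var[(fun ω => kink c₁ c₂ (s + X ω)) +
          fun ω => kink c₁ c₂ (X ω) - kink c₁ c₂ (s + X ω); μ] := by
        congr 1; ext ω; simp
    _ ≤ _ := variance_add_le_two_mul hshift hdiff
    _ ≤ _ := by gcongr

lemma variance_kink_add_le_kinkMeanVar (h₁ : c₁ ^ 2 ≤ d₁) (h₂ : c₂ ^ 2 ≤ d₂)
    (hX : MemLp X 2 μ) (γ : ℝ) :
    Var[fun ω => kink c₁ c₂ (X ω); μ] + γ * ∫ ω, kink c₁ c₂ (X ω) ∂μ ≤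
      kinkMeanVar μ γ c₁ c₂ d₁ d₂ X := by
  have h := integral_mono hX.kink_comp.integrable_sq hX.integrable_kinkQuad_comp
    fun ω => kink_sq_le_kinkQuad (x := X ω) h₁ h₂
  rw [variance_eq_sub hX.kink_comp, kinkMeanVar]
  simp only [Pi.pow_apply] at h ⊢
  linarith

lemma variance_kink_pos {Z : Ω → ℝ} (hZ : MemLp Z 2 μ) (hc : (c₁, c₂) ≠ (0, 0))
    (hpos : 0 < μ {ω | 0 < Z ω}) (hneg : 0 < μ {ω | Z ω < 0})
    (hatom : ∀ z : ℝ, μ {ω | Z ω = z} = 0) :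
    0 < Var[fun ω => kink c₁ c₂ (Z ω); μ] := by
  refine (variance_nonneg _ _).lt_of_ne' fun h0 => ?_
  have hconst := ae_eq_integral_of_variance_eq_zero hZ.kink_comp h0
  set m := ∫ ω, kink c₁ c₂ (Z ω) ∂μ
  -- where `kink ∘ Z = c * Z` with `c ≠ 0`, a.s. constancy pins `Z` to the atom `m / c`
  have hnull : ∀ (S : Set Ω) (c : ℝ), c ≠ 0 → (∀ ω ∈ S, kink c₁ c₂ (Z ω) = c * Z ω) →
      μ S = 0 := by
    intro S c hc hS
    refine measure_mono_null (fun ω hω => ?_)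
      (measure_union_null (hatom (m / c)) (ae_iff.1 hconst))
    by_cases h : kink c₁ c₂ (Z ω) = m
    · left
      rw [Set.mem_ofPred_eq, eq_div_iff hc, mul_comm, ← hS ω hω, h]
    · exact Or.inr h
  by_cases hc₁ : c₁ = 0
  · have hc₂ : c₂ ≠ 0 := fun h => hc (by rw [hc₁, h])
    exact hpos.ne' (hnull _ c₂ hc₂ fun ω hω => kink_of_nonneg (le_of_lt hω))
  · exact hneg.ne' (hnull _ c₁ hc₁ fun ω hω => kink_of_nonpos (le_of_lt hω))

end RandomVariable

lemma exists_pos_mul_norm_sq_le_of_homogeneous {E : Type*} [NormedAddCommGroup E]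
    [NormedSpace ℝ E] [ProperSpace E] {V : E → ℝ} (hV : Continuous V)
    (hhom : ∀ t : ℝ, 0 ≤ t → ∀ K, V (t • K) = t ^ 2 * V K) (hpos : ∀ K, K ≠ 0 → 0 < V K) :
    ∃ a > 0, ∀ K, a * ‖K‖ ^ 2 ≤ V K := by
  have hV0 : V 0 = 0 := by simpa using hhom 0 le_rfl 0
  have hunit : ∀ K : E, K ≠ 0 → ‖K‖⁻¹ • K ∈ Metric.sphere (0 : E) 1 := fun K hK => by
    simp [norm_smul, hK]
  by_cases hE : ∃ K : E, K ≠ 0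
  · obtain ⟨K₁, hK₁⟩ := hE
    obtain ⟨L, hL, hmin⟩ :=
      (isCompact_sphere (0 : E) 1).exists_isMinOn ⟨_, hunit K₁ hK₁⟩ hV.continuousOn
    refine ⟨V L, hpos L (ne_zero_of_mem_unit_sphere ⟨L, hL⟩), fun K => ?_⟩
    rcases eq_or_ne K 0 with rfl | hK
    · simp [hV0]
    · have hnorm : 0 < ‖K‖ := norm_pos_iff.2 hK
      calc V L * ‖K‖ ^ 2 ≤ V (‖K‖⁻¹ • K) * ‖K‖ ^ 2 := by gcongr; exact hmin (hunit K hK)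
        _ = V K := by rw [hhom _ (inv_nonneg.2 hnorm.le)]; field_simp
  · push Not at hE
    exact ⟨1, one_pos, fun K => by simp [hE K, hV0]⟩

lemma sq_const_add_inner_le {E : Type*} [NormedAddCommGroup E] [InnerProductSpace ℝ E]
    {p K : E} {R : ℝ} (hK : ‖K‖ ≤ R) (s : ℝ) :
    (s + ⟪p, K⟫) ^ 2 ≤ 2 * s ^ 2 + 2 * R ^ 2 * ‖p‖ ^ 2 := by
  have h : |⟪p, K⟫| ≤ R * ‖p‖ := by
    rw [mul_comm]
    exact (abs_real_inner_le_norm p K).trans (by gcongr)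
  have h2 : ⟪p, K⟫ ^ 2 ≤ (R * ‖p‖) ^ 2 := by
    rw [← sq_abs]; exact pow_le_pow_left₀ (abs_nonneg _) h 2
  nlinarith [sq_nonneg (s - ⟪p, K⟫)]

lemma mul_add_inner_eq_mul_const_add_inner {E : Type*} [NormedAddCommGroup E]
    [InnerProductSpace ℝ E] {Y : ℝ} (hY : Y ≠ 0) (s : ℝ) (p u : E) :
    s * Y + ⟪p, u⟫ = Y * (s + ⟪p, (1 / Y) • u⟫) := by
  rw [real_inner_smul_right]; field_simp

section InnerProduct

open ProbabilityTheory

variable {Ω E : Type*} [MeasurableSpace Ω] {μ : Measure Ω}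
  [NormedAddCommGroup E] [InnerProductSpace ℝ E] {P : Ω → E} {c₁ c₂ d₁ d₂ : ℝ}

lemma variance_kink_inner_smul (K : E) {t : ℝ} (ht : 0 ≤ t) :
    Var[fun ω => kink c₁ c₂ ⟪P ω, t • K⟫; μ] = t ^ 2 * Var[fun ω => kink c₁ c₂ ⟪P ω, K⟫; μ] := by
  simp_rw [real_inner_smul_right, kink_mul_of_nonneg ht]
  exact variance_const_mul _ _ _

variable [IsProbabilityMeasure μ]

lemma continuous_integral_comp_const_add_inner (hP : MemLp P 2 μ) {h : ℝ → ℝ}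
    (hh : Continuous h) {c : ℝ} (hgrowth : ∀ x, |h x| ≤ c * (1 + x ^ 2)) (s : ℝ) :
    Continuous fun K => ∫ ω, h (s + ⟪P ω, K⟫) ∂μ := by
  have hc : 0 ≤ c := by nlinarith [abs_nonneg (h 0), hgrowth 0]
  refine continuous_iff_continuousAt.2 fun K₀ => continuousAt_of_dominated
    (bound := fun ω => c * (1 + (2 * s ^ 2 + 2 * (‖K₀‖ + 1) ^ 2 * ‖P ω‖ ^ 2))) ?_ ?_ ?_ ?_
  · exact .of_forall fun K =>
      hh.comp_aestronglyMeasurable ((hP.inner_const K).1.const_add s)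
  · filter_upwards [Metric.closedBall_mem_nhds K₀ one_pos] with K hK
    refine .of_forall fun ω => (hgrowth _).trans ?_
    gcongr
    exact sq_const_add_inner_le (norm_le_of_mem_closedBall hK) s
  · exact ((integrable_const 1).add ((integrable_const _).add
      ((hP.integrable_norm_pow two_ne_zero).const_mul _))).const_mul c
  · exact .of_forall fun ω => by fun_prop

lemma continuous_integral_kink (hP : MemLp P 2 μ) (s : ℝ) :
    Continuous fun K => ∫ ω, kink c₁ c₂ (s + ⟪P ω, K⟫) ∂μ :=
  continuous_integral_comp_const_add_inner hP continuous_kink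
    (fun x => abs_kink_le.trans (by gcongr; nlinarith [sq_abs x, sq_nonneg (|x| - 1)])) s

lemma continuous_integral_kinkQuad (hP : MemLp P 2 μ) (s : ℝ) :
    Continuous fun K => ∫ ω, kinkQuad d₁ d₂ (s + ⟪P ω, K⟫) ∂μ :=
  continuous_integral_comp_const_add_inner hP continuous_kinkQuad
    (fun x => abs_kinkQuad_le.trans (by gcongr; linarith)) s

lemma continuous_kinkMeanVar (hP : MemLp P 2 μ) (γ s : ℝ) :
    Continuous fun K => kinkMeanVar μ γ c₁ c₂ d₁ d₂ (fun ω => s + ⟪P ω, K⟫) := by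
  have hlin := continuous_integral_kink (c₁ := c₁) (c₂ := c₂) hP s
  exact ((continuous_integral_kinkQuad hP s).sub (hlin.pow 2)).add (continuous_const.mul hlin)

lemma continuous_variance_kink_inner (hP : MemLp P 2 μ) :
    Continuous fun K => Var[fun ω => kink c₁ c₂ ⟪P ω, K⟫; μ] := by
  have h : (fun K => Var[fun ω => kink c₁ c₂ ⟪P ω, K⟫; μ]) = fun K =>
      (∫ ω, kinkQuad (c₁ ^ 2) (c₂ ^ 2) (0 + ⟪P ω, K⟫) ∂μ) -
        (∫ ω, kink c₁ c₂ (0 + ⟪P ω, K⟫) ∂μ) ^ 2 := by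
    ext K
    rw [variance_eq_sub (hP.inner_const K).kink_comp]
    simp [kink_sq]
  rw [h]
  exact (continuous_integral_kinkQuad hP 0).sub ((continuous_integral_kink hP 0).pow 2)

lemma abs_integral_kink_const_add_inner_le (hP : MemLp P 2 μ) (s : ℝ) (K : E) :
    |∫ ω, kink c₁ c₂ (s + ⟪P ω, K⟫) ∂μ| ≤
      (|c₁| + |c₂|) * (|s| + ‖K‖ * ∫ ω, ‖P ω‖ ∂μ) := by
  have hnorm : Integrable (fun ω => ‖P ω‖) μ := (hP.integrable one_le_two).norm
  calc |∫ ω, kink c₁ c₂ (s + ⟪P ω, K⟫) ∂μ|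
      ≤ ∫ ω, |kink c₁ c₂ (s + ⟪P ω, K⟫)| ∂μ := by
        simpa only [Real.norm_eq_abs] using
          norm_integral_le_integral_norm (fun ω => kink c₁ c₂ (s + ⟪P ω, K⟫))
    _ ≤ ∫ ω, (|c₁| + |c₂|) * (|s| + ‖K‖ * ‖P ω‖) ∂μ := by
        refine integral_mono_of_nonneg (.of_forall fun _ => abs_nonneg _)
          (((integrable_const _).add (hnorm.const_mul _)).const_mul _) (.of_forall fun ω => ?_)
        refine abs_kink_le.trans (mul_le_mul_of_nonneg_left ?_ (by positivity))
        linarith [abs_add_le s ⟪P ω, K⟫, abs_real_inner_le_norm (P ω) K]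
    _ = (|c₁| + |c₂|) * (|s| + ‖K‖ * ∫ ω, ‖P ω‖ ∂μ) := by
        rw [integral_const_mul, integral_add (integrable_const _) (hnorm.const_mul _),
          integral_const_mul]
        simp

end InnerProduct

section Coercive

open ProbabilityTheory

variable {Ω E : Type*} [MeasurableSpace Ω] {μ : Measure Ω} [IsProbabilityMeasure μ]
  [NormedAddCommGroup E] [InnerProductSpace ℝ E] [ProperSpace E] {P : Ω → E}
  {c₁ c₂ d₁ d₂ : ℝ}

lemma exists_pos_mul_norm_sq_le_variance_kink_inner (hP : MemLp P 2 μ)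
    (hc : (c₁, c₂) ≠ (0, 0))
    (htwosided : ∀ L : E, L ≠ 0 → 0 < μ {ω | 0 < ⟪P ω, L⟫} ∧ 0 < μ {ω | ⟪P ω, L⟫ < 0})
    (hatomless : ∀ L : E, L ≠ 0 → ∀ c : ℝ, μ {ω | ⟪P ω, L⟫ = c} = 0) :
    ∃ a > 0, ∀ K, a * ‖K‖ ^ 2 ≤ Var[fun ω => kink c₁ c₂ ⟪P ω, K⟫; μ] :=
  exists_pos_mul_norm_sq_le_of_homogeneous (continuous_variance_kink_inner hP)
    (fun _ ht K => variance_kink_inner_smul K ht) fun L hL =>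
      variance_kink_pos (hP.inner_const L) hc (htwosided L hL).1 (htwosided L hL).2
        (hatomless L hL)

theorem tendsto_kinkMeanVar_cocompact (hP : MemLp P 2 μ) (hc : (c₁, c₂) ≠ (0, 0))
    (htwosided : ∀ L : E, L ≠ 0 → 0 < μ {ω | 0 < ⟪P ω, L⟫} ∧ 0 < μ {ω | ⟪P ω, L⟫ < 0})
    (hatomless : ∀ L : E, L ≠ 0 → ∀ c : ℝ, μ {ω | ⟪P ω, L⟫ = c} = 0)
    (h₁ : c₁ ^ 2 ≤ d₁) (h₂ : c₂ ^ 2 ≤ d₂) (γ s : ℝ) :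
    Tendsto (fun K => kinkMeanVar μ γ c₁ c₂ d₁ d₂ (fun ω => s + ⟪P ω, K⟫)) (cocompact E)
      atTop := by
  obtain ⟨a, ha, hV⟩ := exists_pos_mul_norm_sq_le_variance_kink_inner hP hc htwosided hatomless
  set m := ∫ ω, ‖P ω‖ ∂μ
  have hlower : ∀ K, ‖K‖ * (a / 2 * ‖K‖ - |γ| * (|c₁| + |c₂|) * m) -
      (((|c₁| + |c₂|) * |s|) ^ 2 + |γ| * (|c₁| + |c₂|) * |s|) ≤
        kinkMeanVar μ γ c₁ c₂ d₁ d₂ (fun ω => s + ⟪P ω, K⟫) := by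
    intro K
    have hX : MemLp (fun ω => ⟪P ω, K⟫) 2 μ := hP.inner_const K
    have hvar := variance_kink_le_variance_kink_const_add (c₁ := c₁) (c₂ := c₂) hX s
    have hXs : MemLp (fun ω => s + ⟪P ω, K⟫) 2 μ := (memLp_const s).add hX
    have hobj := variance_kink_add_le_kinkMeanVar h₁ h₂ hXs γ
    have hmean : -(|γ| * ((|c₁| + |c₂|) * (|s| + ‖K‖ * m))) ≤
        γ * ∫ ω, kink c₁ c₂ (s + ⟪P ω, K⟫) ∂μ := by
      refine le_trans ?_ (neg_abs_le _)
      rw [neg_le_neg_iff, abs_mul]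
      exact mul_le_mul_of_nonneg_left (abs_integral_kink_const_add_inner_le hP s K)
        (abs_nonneg γ)
    linarith [hV K]
  have hquad : Tendsto (fun r : ℝ => r * (a / 2 * r - |γ| * (|c₁| + |c₂|) * m) -
      (((|c₁| + |c₂|) * |s|) ^ 2 + |γ| * (|c₁| + |c₂|) * |s|)) atTop atTop := by
    simp only [sub_eq_add_neg]
    exact tendsto_atTop_add_const_right _ _ (tendsto_id.atTop_mul_atTop₀
      (tendsto_atTop_add_const_right _ _ (tendsto_id.const_mul_atTop (half_pos ha))))
  exact tendsto_atTop_mono hlower (hquad.comp tendsto_norm_cocompact_atTop)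

end Coercive

section Portfolio

open ProbabilityTheory

variable {Ω : Type*} {n : ℕ} {P : Ω → EuclideanSpace ℝ (Fin n)}

lemma mRV_eq_mul_kink {s ρ' ap am Y : ℝ} (hY : Y < 0) (u : EuclideanSpace ℝ (Fin n)) (ω : Ω) :
    mRV P s ρ' ap am Y u ω = Y * kink (ρ' + ap) (ρ' + am) (s + ⟪P ω, (1 / Y) • u⟫) := by
  simp only [mRV, mul_add_inner_eq_mul_const_add_inner hY.ne]
  generalize s + ⟪P ω, (1 / Y) • u⟫ = x
  rcases le_or_gt x 0 with hx | hx
  · have hYx : 0 ≤ Y * x := mul_nonneg_of_nonpos_of_nonpos hY.le hx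
    simp only [if_pos hYx, if_neg hYx.not_gt, kink_of_nonpos hx]; ring
  · have hYx : Y * x < 0 := mul_neg_of_neg_of_pos hY hx
    simp only [if_neg hYx.not_ge, if_pos hYx, kink_of_nonneg hx.le]; ring

lemma qRV_eq_sq_mul_kinkQuad {s ρ' ap am bp bm Y : ℝ} (hY : Y < 0)
    (u : EuclideanSpace ℝ (Fin n)) (ω : Ω) :
    qRV P s ρ' ap am bp bm Y u ω = Y ^ 2 * kinkQuad (ρ' ^ 2 + (2 * ρ' * ap + bp))
      (ρ' ^ 2 + (2 * ρ' * am + bm)) (s + ⟪P ω, (1 / Y) • u⟫) := by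
  simp only [qRV, mul_add_inner_eq_mul_const_add_inner hY.ne]
  generalize s + ⟪P ω, (1 / Y) • u⟫ = x
  rcases le_or_gt x 0 with hx | hx
  · have hYx : 0 ≤ Y * x := mul_nonneg_of_nonpos_of_nonpos hY.le hx
    simp only [if_pos hYx, if_neg hYx.not_gt, kinkQuad_of_nonpos hx]; ring
  · have hYx : Y * x < 0 := mul_neg_of_neg_of_pos hY hx
    simp only [if_neg hYx.not_ge, if_pos hYx, kinkQuad_of_nonneg hx.le]; ring

variable [MeasurableSpace Ω] {μ : Measure Ω}

lemma mean_variance_eq_sq_mul_kinkMeanVar {s ρ' ap am bp bm Y : ℝ} (γm : ℝ) (hY : Y < 0)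
    (u : EuclideanSpace ℝ (Fin n)) :
    (∫ ω, qRV P s ρ' ap am bp bm Y u ω ∂μ) - (∫ ω, mRV P s ρ' ap am Y u ω ∂μ) ^ 2 +
        γm * Y * (∫ ω, mRV P s ρ' ap am Y u ω ∂μ) =
      Y ^ 2 * kinkMeanVar μ γm (ρ' + ap) (ρ' + am) (ρ' ^ 2 + (2 * ρ' * ap + bp))
        (ρ' ^ 2 + (2 * ρ' * am + bm)) (fun ω => s + ⟪P ω, (1 / Y) • u⟫) := by
  simp only [mRV_eq_mul_kink hY, qRV_eq_sq_mul_kinkQuad hY, integral_const_mul, kinkMeanVar]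
  ring

lemma Fminus_eq_kinkMeanVar [IsProbabilityMeasure μ] (hP : MemLp P 2 μ)
    (s ρ' γm ap am bp bm : ℝ) (K : EuclideanSpace ℝ (Fin n)) :
    Fminus μ P s ρ' γm ap am bp bm K =
      kinkMeanVar μ γm (ρ' + ap) (ρ' + am) (ρ' ^ 2 + (2 * ρ' * ap + bp))
        (ρ' ^ 2 + (2 * ρ' * am + bm)) (fun ω => s + ⟪P ω, K⟫) := by
  have hZ : MemLp (fun ω => ⟪P ω, K⟫) 2 μ := hP.inner_const K
  have hX : MemLp (fun ω => s + ⟪P ω, K⟫) 2 μ := (memLp_const s).add hZ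
  have hmean : ∫ ω, s + ⟪P ω, K⟫ ∂μ = s + ∫ ω, ⟪P ω, K⟫ ∂μ := by
    rw [integral_add (integrable_const s) (hZ.integrable one_le_two)]; simp
  have hvar : (∫ ω, (s + ⟪P ω, K⟫) ^ 2 ∂μ) - (∫ ω, s + ⟪P ω, K⟫ ∂μ) ^ 2 =
      (∫ ω, ⟪P ω, K⟫ ^ 2 ∂μ) - (∫ ω, ⟪P ω, K⟫ ∂μ) ^ 2 := by
    have h := variance_const_add hZ.1 s
    rwa [variance_eq_sub hX, variance_eq_sub hZ] at h
  simp only [Fminus, ← kink_zero_right, ← kink_zero_left, ← kinkQuad_zero_right,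
    ← kinkQuad_zero_left]
  rw [kinkMeanVar, integral_kink_add_slopes hX, integral_kinkQuad_add_coeffs hX,
    integral_kink_eq_add (c₁ := ap) (c₂ := am) hX,
    integral_kinkQuad_eq_add (d₁ := 2 * ρ' * ap + bp) (d₂ := 2 * ρ' * am + bm) hX, hmean]
  rw [hmean] at hvar
  linear_combination -ρ' ^ 2 * hvar

end Portfolio

lemma minimizers_of_eq_mul_comp {α β : Type*} {J : α → ℝ} {G : β → ℝ} {e : α → β}
    (he : Function.Surjective e) {c : ℝ} (hc : 0 < c) (hJ : ∀ u, J u = c * G (e u))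
    (hG : ∃ K, ∀ K', G K ≤ G K') :
    (∃ u₀, ∀ u, J u₀ ≤ J u) ∧ (∀ u₀, (∀ u, J u₀ ≤ J u) ↔ ∀ K, G (e u₀) ≤ G K) ∧
      ∀ u₀ K₀, (∀ u, J u₀ ≤ J u) → (∀ K, G K₀ ≤ G K) → J u₀ = c * G K₀ := by
  have hiff : ∀ u₀, (∀ u, J u₀ ≤ J u) ↔ ∀ K, G (e u₀) ≤ G K := fun u₀ => by
    simp only [hJ, mul_le_mul_iff_of_pos_left hc]
    exact (he.forall (p := fun K => G (e u₀) ≤ G K)).symm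
  obtain ⟨K₀, hK₀⟩ := hG
  obtain ⟨u₀, rfl⟩ := he K₀
  refine ⟨⟨u₀, (hiff u₀).2 hK₀⟩, hiff, fun u₁ K₁ hu₁ hK₁ => ?_⟩
  rw [hJ, le_antisymm ((hiff u₁).1 hu₁ K₁) (hK₁ _)]

theorem J_min_iff_Fminus_min_general {Ω : Type*} [MeasurableSpace Ω] (ℙ : Measure Ω)
    [IsProbabilityMeasure ℙ] {n : ℕ}
    (P : Ω → EuclideanSpace ℝ (Fin n)) (hmeas : Measurable P)
    (hL2 : Integrable (fun ω => ‖P ω‖ ^ 2) ℙ)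
    (s ρ' γm ap am bp bm : ℝ)
    (htwosided : ∀ L : EuclideanSpace ℝ (Fin n), L ≠ 0 →
      0 < ℙ {ω | 0 < (inner ℝ (P ω) L : ℝ)} ∧ 0 < ℙ {ω | (inner ℝ (P ω) L : ℝ) < 0})
    (hatomless : ∀ L : EuclideanSpace ℝ (Fin n), L ≠ 0 →
      ∀ c : ℝ, ℙ {ω | (inner ℝ (P ω) L : ℝ) = c} = 0)
    (hbp : ap ^ 2 ≤ bp) (hbm : am ^ 2 ≤ bm)
    (hne : (ρ' + ap, ρ' + am) ≠ ((0 : ℝ), (0 : ℝ)))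
    (Y : ℝ) (hY : Y < 0) :
    let J : EuclideanSpace ℝ (Fin n) → ℝ := fun u =>
      (∫ ω, qRV P s ρ' ap am bp bm Y u ω ∂ℙ) -
        (∫ ω, mRV P s ρ' ap am Y u ω ∂ℙ) ^ 2 +
        γm * Y * (∫ ω, mRV P s ρ' ap am Y u ω ∂ℙ)
    let F : EuclideanSpace ℝ (Fin n) → ℝ := Fminus ℙ P s ρ' γm ap am bp bm
    (∃ ustar : EuclideanSpace ℝ (Fin n), ∀ u, J ustar ≤ J u) ∧
      (∀ ustar : EuclideanSpace ℝ (Fin n),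
        (∀ u, J ustar ≤ J u) ↔ (∀ K, F ((1 / Y) • ustar) ≤ F K)) ∧
      (∀ (ustar Kstar : EuclideanSpace ℝ (Fin n)),
        (∀ u, J ustar ≤ J u) → (∀ K, F Kstar ≤ F K) →
          J ustar = Y ^ 2 * F Kstar) := by
  intro J F
  have hP : MemLp P 2 ℙ := (memLp_two_iff_integrable_sq_norm hmeas.aestronglyMeasurable).2 hL2
  have hF := Fminus_eq_kinkMeanVar hP s ρ' γm ap am bp bm
  have hJ : ∀ u, J u = Y ^ 2 * F ((1 / Y) • u) := fun u =>
    (mean_variance_eq_sq_mul_kinkMeanVar γm hY u).trans (by simp only [F, hF])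
  have hFmin : ∃ K, ∀ K', F K ≤ F K' := by
    simp only [F, hF]
    exact (continuous_kinkMeanVar hP γm s).exists_forall_le
      (tendsto_kinkMeanVar_cocompact hP hne htwosided hatomless (by linarith) (by linarith) γm s)
  exact minimizers_of_eq_mul_comp (fun K => ⟨Y • K, by simp [smul_smul, hY.ne]⟩)
    (sq_pos_of_neg hY) hJ hFmin

/-- For `Y < 0` and `J(u) = E[q] − (E[m])² + γ⁻Y·E[m]` (with `Y' = sY + P'u`):
`J` attains its global minimum on `ℝⁿ`; `u*` is a global minimizer of `J` iff
`K* = u*/Y` is a global minimizer of `F⁻`; and any global minimum value of `J`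
equals `Y²` times the global minimum value of `F⁻`. -/
theorem J_min_iff_Fminus_min {Ω : Type*} [MeasurableSpace Ω] (ℙ : Measure Ω)
    [IsProbabilityMeasure ℙ] {n : ℕ} (hn : 1 ≤ n)
    (P : Ω → EuclideanSpace ℝ (Fin n)) (hmeas : Measurable P)
    (hL2 : Integrable (fun ω => ‖P ω‖ ^ 2) ℙ)
    (s ρ' γm ap am bp bm : ℝ) (hs : 0 < s) (hρ : 0 < ρ')
    (htwosided : ∀ L : EuclideanSpace ℝ (Fin n), L ≠ 0 →
      0 < ℙ {ω | 0 < (inner ℝ (P ω) L : ℝ)} ∧ 0 < ℙ {ω | (inner ℝ (P ω) L : ℝ) < 0})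
    (hatomless : ∀ L : EuclideanSpace ℝ (Fin n), L ≠ 0 →
      ∀ c : ℝ, ℙ {ω | (inner ℝ (P ω) L : ℝ) = c} = 0)
    (hbp : ap ^ 2 ≤ bp) (hbm : am ^ 2 ≤ bm)
    (hne : (ρ' + ap, ρ' + am) ≠ ((0 : ℝ), (0 : ℝ)))
    (Y : ℝ) (hY : Y < 0) :
    let J : EuclideanSpace ℝ (Fin n) → ℝ := fun u =>
      (∫ ω, qRV P s ρ' ap am bp bm Y u ω ∂ℙ) -
        (∫ ω, mRV P s ρ' ap am Y u ω ∂ℙ) ^ 2 +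
        γm * Y * (∫ ω, mRV P s ρ' ap am Y u ω ∂ℙ)
    let F : EuclideanSpace ℝ (Fin n) → ℝ := Fminus ℙ P s ρ' γm ap am bp bm
    (∃ ustar : EuclideanSpace ℝ (Fin n), ∀ u, J ustar ≤ J u) ∧
      (∀ ustar : EuclideanSpace ℝ (Fin n),
        (∀ u, J ustar ≤ J u) ↔ (∀ K, F ((1 / Y) • ustar) ≤ F K)) ∧
      (∀ (ustar Kstar : EuclideanSpace ℝ (Fin n)),
        (∀ u, J ustar ≤ J u) → (∀ K, F Kstar ≤ F K) →
          J ustar = Y ^ 2 * F Kstar) :=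
  J_min_iff_Fminus_min_general ℙ P hmeas hL2 s ρ' γm ap am bp bm htwosided hatomless hbp hbm hne Y
    hY
end

section
/- Suppose P is two-sided and directionally atomless, that b⁺ ≥ (a⁺)² and b⁻ ≥ (a⁻)², and that (ρ'+a⁺, ρ'+a⁻) ≠ (0,0). Let M ∈ ℝ^{m×n}, 𝒜 = {u ∈ ℝⁿ : Mu ≥ 0 componentwise} and −𝒜 = {−u : u ∈ 𝒜}. Fix Y < 0 and define J(u) = E[q] − (E[m])² + γ⁻Y·E[m] for u ∈ ℝⁿ (where Y' = sY + P'u). Then for u ∈ ℝⁿ one has u ∈ 𝒜 if and only if u/Y ∈ −𝒜; J attains its minimum over 𝒜; a vector u* ∈ 𝒜 minimizes J over 𝒜 if and only if K* = u*/Y minimizes F⁻ over −𝒜; and min_{u∈𝒜} J(u) = Y²·min_{K∈−𝒜} F⁻(K). -/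
/-!
For `Y < 0` we have `Y' = sY + P'(YK) = Y (s + P'K)`, so the regimes `Y' ≥ 0`, `Y' < 0` become
`s + P'K ≤ 0`, `s + P'K > 0`, and expanding the expectations gives `J(YK) = Y² F⁻(K)`. Since
`u ↦ u / Y` maps the cone `𝒜` onto `−𝒜`, minimisers of `J` on `𝒜` and of `F⁻` on `−𝒜` correspond.

For existence, `m` and `q` are positively homogeneous functions of `Y'` of degree one and two, so
`J(t v) = t² Φ(1/t, v)` with `Φ` jointly continuous and `Φ(0, v) = E[q_v] − E[m_v]² ≥ Var(m_v)`:
`b± ≥ (a±)²` gives `q ≥ m²`, and two-sidedness plus atomlessness prevent `m_v` from being a.s.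
constant for `v ≠ 0`. Compactness of the unit sphere then makes `J` coercive, and a continuous
coercive function attains its minimum on the closed cone `𝒜`.
-/

open MeasureTheory

open Filter Topology Set
open scoped RealInnerProductSpace

noncomputable def pwLin (α β t : ℝ) : ℝ := α * max t 0 + β * min t 0

noncomputable def pwQuad (α β t : ℝ) : ℝ := α * max t 0 ^ 2 + β * min t 0 ^ 2

section Piecewise

variable {α β t : ℝ}

lemma pwLin_of_nonneg (ht : 0 ≤ t) : pwLin α β t = α * t := by
  simp [pwLin, ht]

lemma pwLin_of_nonpos (ht : t ≤ 0) : pwLin α β t = β * t := by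
  simp [pwLin, ht]

lemma pwQuad_of_nonneg (ht : 0 ≤ t) : pwQuad α β t = α * t ^ 2 := by
  simp [pwQuad, ht]

lemma pwQuad_of_nonpos (ht : t ≤ 0) : pwQuad α β t = β * t ^ 2 := by
  simp [pwQuad, ht]

lemma pwLin_mul_of_nonneg {c : ℝ} (hc : 0 ≤ c) (t : ℝ) : pwLin α β (c * t) = c * pwLin α β t := by
  rcases le_total 0 t with ht | ht
  · rw [pwLin_of_nonneg ht, pwLin_of_nonneg (mul_nonneg hc ht)]; ring
  · rw [pwLin_of_nonpos ht, pwLin_of_nonpos (mul_nonpos_of_nonneg_of_nonpos hc ht)]; ring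

lemma pwQuad_mul_of_nonneg {c : ℝ} (hc : 0 ≤ c) (t : ℝ) :
    pwQuad α β (c * t) = c ^ 2 * pwQuad α β t := by
  rcases le_total 0 t with ht | ht
  · rw [pwQuad_of_nonneg ht, pwQuad_of_nonneg (mul_nonneg hc ht)]; ring
  · rw [pwQuad_of_nonpos ht, pwQuad_of_nonpos (mul_nonpos_of_nonneg_of_nonpos hc ht)]; ring

lemma sq_pwLin (α β t : ℝ) : pwLin α β t ^ 2 = pwQuad (α ^ 2) (β ^ 2) t := by
  rcases le_total 0 t with ht | ht
  · rw [pwLin_of_nonneg ht, pwQuad_of_nonneg ht]; ring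
  · rw [pwLin_of_nonpos ht, pwQuad_of_nonpos ht]; ring

lemma pwQuad_mono {α₂ β₂ : ℝ} (hα : α ≤ α₂) (hβ : β ≤ β₂) (t : ℝ) :
    pwQuad α β t ≤ pwQuad α₂ β₂ t := by
  unfold pwQuad; gcongr

lemma abs_pwLin_le (α β t : ℝ) : |pwLin α β t| ≤ (|α| + |β|) * (1 + t ^ 2) := by
  have : |t| ≤ 1 + t ^ 2 := by nlinarith [abs_nonneg t, sq_abs t, sq_nonneg (|t| - 1)]
  rcases le_total 0 t with ht | ht <;>
    simp only [pwLin_of_nonneg, pwLin_of_nonpos, ht, abs_mul] <;>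
    nlinarith [abs_nonneg α, abs_nonneg β]

lemma abs_pwQuad_le (α β t : ℝ) : |pwQuad α β t| ≤ (|α| + |β|) * (1 + t ^ 2) := by
  rcases le_total 0 t with ht | ht <;>
    simp only [pwQuad_of_nonneg, pwQuad_of_nonpos, ht, abs_mul, abs_pow, sq_abs] <;>
    nlinarith [abs_nonneg α, abs_nonneg β, sq_nonneg t]

lemma pwLin_one_one (t : ℝ) : pwLin 1 1 t = t := by
  simp only [pwLin, one_mul, max_add_min, add_zero]

lemma pwQuad_one_one (t : ℝ) : pwQuad 1 1 t = t ^ 2 := by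
  simpa [pwLin_one_one] using (sq_pwLin 1 1 t).symm

lemma mul_ite_nonpos_eq_pwLin (a t : ℝ) : a * t * (if t ≤ 0 then 1 else 0) = pwLin 0 a t := by
  rcases le_or_gt t 0 with ht | ht
  · simp [ht, pwLin_of_nonpos]
  · simp [not_le.2 ht, pwLin_of_nonneg ht.le]

lemma mul_ite_pos_eq_pwLin (a t : ℝ) : a * t * (if 0 < t then 1 else 0) = pwLin a 0 t := by
  rcases le_or_gt t 0 with ht | ht
  · simp [not_lt.2 ht, pwLin_of_nonpos ht]
  · simp [ht, pwLin_of_nonneg ht.le]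

lemma mul_sq_ite_nonpos_eq_pwQuad (a t : ℝ) :
    a * t ^ 2 * (if t ≤ 0 then 1 else 0) = pwQuad 0 a t := by
  rcases le_or_gt t 0 with ht | ht
  · simp [ht, pwQuad_of_nonpos]
  · simp [not_le.2 ht, pwQuad_of_nonneg ht.le]

lemma mul_sq_ite_pos_eq_pwQuad (a t : ℝ) :
    a * t ^ 2 * (if 0 < t then 1 else 0) = pwQuad a 0 t := by
  rcases le_or_gt t 0 with ht | ht
  · simp [not_lt.2 ht, pwQuad_of_nonpos ht]
  · simp [ht, pwQuad_of_nonneg ht.le]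

@[fun_prop]
lemma continuous_pwLin (α β : ℝ) : Continuous (pwLin α β) := by
  unfold pwLin; fun_prop

@[fun_prop]
lemma continuous_pwQuad (α β : ℝ) : Continuous (pwQuad α β) := by
  unfold pwQuad; fun_prop

end Piecewise

section GrowthIntegrals

variable {Ω E : Type*} [MeasurableSpace Ω] {μ : Measure Ω} [IsFiniteMeasure μ]
  [NormedAddCommGroup E] {P : Ω → E}

lemma integrable_growth_bound (hL2 : Integrable (fun ω => ‖P ω‖ ^ 2) μ) (C R : ℝ) :
    Integrable (fun ω => C * (1 + 2 * R ^ 2 * (1 + ‖P ω‖ ^ 2))) μ :=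
  ((integrable_const 1).add (((integrable_const 1).add hL2).const_mul _)).const_mul C

variable [InnerProductSpace ℝ E] {φ : ℝ → ℝ} {C : ℝ}

lemma abs_comp_add_inner_le (hC : ∀ t, |φ t| ≤ C * (1 + t ^ 2)) {R c : ℝ} {u : E}
    (hc : |c| ≤ R) (hu : ‖u‖ ≤ R) (x : E) :
    |φ (c + ⟪x, u⟫)| ≤ C * (1 + 2 * R ^ 2 * (1 + ‖x‖ ^ 2)) := by
  have hC0 : 0 ≤ C := by nlinarith [hC 0, abs_nonneg (φ 0)]
  have hinner : ⟪x, u⟫ ^ 2 ≤ R ^ 2 * ‖x‖ ^ 2 := by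
    rw [← sq_abs]
    calc |⟪x, u⟫| ^ 2 ≤ (‖x‖ * ‖u‖) ^ 2 := by gcongr; exact abs_real_inner_le_norm x u
      _ = ‖u‖ ^ 2 * ‖x‖ ^ 2 := by ring
      _ ≤ R ^ 2 * ‖x‖ ^ 2 := by gcongr
  have hc2 : c ^ 2 ≤ R ^ 2 := by rw [← sq_abs]; gcongr
  refine (hC _).trans (mul_le_mul_of_nonneg_left ?_ hC0)
  nlinarith [sq_nonneg (c - ⟪x, u⟫)]

variable [MeasurableSpace E] [OpensMeasurableSpace E]

lemma measurable_comp_add_inner (hP : Measurable P) (hφ : Measurable φ) (c : ℝ) (u : E) :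
    Measurable fun ω => φ (c + ⟪P ω, u⟫) :=
  hφ.comp (measurable_const.add ((continuous_id.inner continuous_const).measurable.comp hP))

theorem integrable_comp_add_inner (hP : Measurable P)
    (hL2 : Integrable (fun ω => ‖P ω‖ ^ 2) μ) (hφ : Measurable φ)
    (hC : ∀ t, |φ t| ≤ C * (1 + t ^ 2)) (c : ℝ) (u : E) :
    Integrable (fun ω => φ (c + ⟪P ω, u⟫)) μ :=
  (integrable_growth_bound hL2 C (max |c| ‖u‖)).mono'
    (measurable_comp_add_inner hP hφ c u).aestronglyMeasurable
    (ae_of_all _ fun _ => abs_comp_add_inner_le hC (le_max_left _ _) (le_max_right _ _) _)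

theorem continuous_integral_comp_add_inner (hP : Measurable P)
    (hL2 : Integrable (fun ω => ‖P ω‖ ^ 2) μ) (hφ : Continuous φ)
    (hC : ∀ t, |φ t| ≤ C * (1 + t ^ 2)) :
    Continuous fun p : ℝ × E => ∫ ω, φ (p.1 + ⟪P ω, p.2⟫) ∂μ := by
  refine continuous_iff_continuousAt.2 fun p₀ => continuousAt_of_dominated
    (Eventually.of_forall fun p : ℝ × E =>
      (measurable_comp_add_inner hP hφ.measurable p.1 p.2).aestronglyMeasurable)
    ?_ (integrable_growth_bound hL2 C (‖p₀‖ + 1)) (ae_of_all _ fun _ => by fun_prop)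
  filter_upwards [Metric.ball_mem_nhds p₀ one_pos] with p hp
  have hp' : ‖p‖ ≤ ‖p₀‖ + 1 := by
    have := norm_le_norm_add_norm_sub' p p₀
    rw [← dist_eq_norm] at this
    linarith [Metric.mem_ball.1 hp]
  exact ae_of_all _ fun ω => abs_comp_add_inner_le hC
    ((norm_fst_le p).trans hp') ((norm_snd_le p).trans hp') _

lemma integrable_pwLin_add_inner (hP : Measurable P) (hL2 : Integrable (fun ω => ‖P ω‖ ^ 2) μ)
    (α β c : ℝ) (u : E) : Integrable (fun ω => pwLin α β (c + ⟪P ω, u⟫)) μ :=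
  integrable_comp_add_inner hP hL2 (continuous_pwLin α β).measurable (abs_pwLin_le α β) c u

lemma integrable_pwQuad_add_inner (hP : Measurable P) (hL2 : Integrable (fun ω => ‖P ω‖ ^ 2) μ)
    (α β c : ℝ) (u : E) : Integrable (fun ω => pwQuad α β (c + ⟪P ω, u⟫)) μ :=
  integrable_comp_add_inner hP hL2 (continuous_pwQuad α β).measurable (abs_pwQuad_le α β) c u

lemma integrable_inner_const (hP : Measurable P) (hL2 : Integrable (fun ω => ‖P ω‖ ^ 2) μ)
    (u : E) : Integrable (fun ω => ⟪P ω, u⟫) μ := by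
  simpa only [pwLin_one_one, zero_add] using integrable_pwLin_add_inner hP hL2 1 1 0 u

end GrowthIntegrals

open ProbabilityTheory in
lemma variance_pwLin_pos {Ω : Type*} [MeasurableSpace Ω] {μ : Measure Ω} [IsFiniteMeasure μ]
    {Z : Ω → ℝ} {α β : ℝ} (hαβ : (α, β) ≠ (0, 0))
    (hL : MemLp (fun ω => pwLin α β (Z ω)) 2 μ)
    (hpos : μ {ω | 0 < Z ω} ≠ 0) (hneg : μ {ω | Z ω < 0} ≠ 0)
    (hatom : ∀ c, μ {ω | Z ω = c} = 0) :
    0 < Var[fun ω => pwLin α β (Z ω); μ] := by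
  refine (variance_nonneg _ _).lt_of_ne' fun hvar => ?_
  have hconst := ae_eq_integral_of_variance_eq_zero hL hvar
  set m := μ[fun ω => pwLin α β (Z ω)]
  -- where `pwLin α β` is linear with a nonzero slope, `Z` is a.e. pinned to a single atom
  have hnull : ∀ {γ : ℝ} {S : Set ℝ}, γ ≠ 0 → (∀ t ∈ S, pwLin α β t = γ * t) →
      μ (Z ⁻¹' S) = 0 := by
    intro γ S hγ hS
    refine measure_mono_null (fun ω hω => ?_)
      (measure_union_null (ae_iff.1 hconst) (hatom (m / γ)))
    by_cases h : pwLin α β (Z ω) = m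
    · right
      show Z ω = m / γ
      rw [eq_div_iff hγ, ← h, hS _ hω, mul_comm]
    · exact Or.inl h
  have : α ≠ 0 ∨ β ≠ 0 := by
    contrapose! hαβ
    rw [hαβ.1, hαβ.2]
  rcases this with hα | hβ
  · exact hpos (hnull (S := Ioi 0) hα fun t ht => pwLin_of_nonneg (le_of_lt ht))
  · exact hneg (hnull (S := Iio 0) hβ fun t ht => pwLin_of_nonpos (le_of_lt ht))

theorem tendsto_cocompact_atTop_of_perspective {E : Type*} [NormedAddCommGroup E]
    [NormedSpace ℝ E] [ProperSpace E] {J : E → ℝ} (f : ℝ → E → ℝ)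
    (hf : Continuous (Function.uncurry f)) (h0 : ∀ v : E, ‖v‖ = 1 → 0 < f 0 v)
    (hJ : ∀ t : ℝ, 0 < t → ∀ v, J (t • v) = t ^ 2 * f t⁻¹ v) :
    Tendsto J (cocompact E) atTop := by
  have hS := isCompact_sphere (0 : E) 1
  obtain ⟨δ, hδ, hδS⟩ := hS.exists_forall_le'
    (hf.comp (continuous_const.prodMk continuous_id)).continuousOn
    fun v hv => h0 v (mem_sphere_zero_iff_norm.1 hv)
  have hnear : ∀ᶠ r in 𝓝 (0 : ℝ), ∀ v ∈ Metric.sphere (0 : E) 1, δ / 2 < f r v :=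
    hS.eventually_forall_of_forall_eventually fun v hv =>
      hf.continuousAt.eventually
        (lt_mem_nhds (by simpa using (half_lt_self hδ).trans_le (hδS v hv)))
  have hinv : Tendsto (fun u : E => ‖u‖⁻¹) (cocompact E) (𝓝 0) :=
    tendsto_inv_atTop_zero.comp tendsto_norm_cocompact_atTop
  have hgrow : Tendsto (fun u : E => δ / 2 * ‖u‖ ^ 2) (cocompact E) atTop :=
    ((tendsto_pow_atTop two_ne_zero).comp tendsto_norm_cocompact_atTop).const_mul_atTop
      (half_pos hδ)
  refine tendsto_atTop_mono' _ ?_ hgrow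
  filter_upwards [hinv.eventually hnear, tendsto_norm_cocompact_atTop.eventually_gt_atTop 0]
    with u hu hpos
  have hv : ‖u‖⁻¹ • u ∈ Metric.sphere (0 : E) 1 := by
    rw [mem_sphere_zero_iff_norm, norm_smul, norm_inv, norm_norm, inv_mul_cancel₀ hpos.ne']
  calc δ / 2 * ‖u‖ ^ 2 ≤ ‖u‖ ^ 2 * f ‖u‖⁻¹ (‖u‖⁻¹ • u) := by
        rw [mul_comm]; gcongr; exact (hu _ hv).le
    _ = J u := by rw [← hJ _ hpos, smul_inv_smul₀ hpos.ne']

section MeanVariance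

variable {Ω E : Type*} [MeasurableSpace Ω] [NormedAddCommGroup E] [InnerProductSpace ℝ E]
  (μ : Measure Ω) (P : Ω → E) (α β α₂ β₂ : ℝ)

noncomputable def meanVarObjective (c κ : ℝ) (u : E) : ℝ :=
  (∫ ω, pwQuad α₂ β₂ (c + ⟪P ω, u⟫) ∂μ) - (∫ ω, pwLin α β (c + ⟪P ω, u⟫) ∂μ) ^ 2 +
    κ * ∫ ω, pwLin α β (c + ⟪P ω, u⟫) ∂μ

lemma meanVarObjective_smul {t : ℝ} (ht : 0 < t) (c κ : ℝ) (v : E) :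
    meanVarObjective μ P α β α₂ β₂ c κ (t • v) =
      t ^ 2 * meanVarObjective μ P α β α₂ β₂ (t⁻¹ * c) (t⁻¹ * κ) v := by
  have harg : ∀ ω, c + ⟪P ω, t • v⟫ = t * (t⁻¹ * c + ⟪P ω, v⟫) := fun ω => by
    rw [real_inner_smul_right]; field_simp
  simp only [meanVarObjective, harg, pwLin_mul_of_nonneg ht.le, pwQuad_mul_of_nonneg ht.le,
    integral_const_mul]
  field_simp

variable {μ P α β α₂ β₂} [IsFiniteMeasure μ] [MeasurableSpace E] [OpensMeasurableSpace E]

lemma continuous_meanVarObjective (hP : Measurable P)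
    (hL2 : Integrable (fun ω => ‖P ω‖ ^ 2) μ) {X : Type*} [TopologicalSpace X]
    {c κ : X → ℝ} {u : X → E} (hc : Continuous c) (hκ : Continuous κ) (hu : Continuous u) :
    Continuous fun x => meanVarObjective μ P α β α₂ β₂ (c x) (κ x) (u x) := by
  have hQ := (continuous_integral_comp_add_inner hP hL2 (continuous_pwQuad α₂ β₂)
    (abs_pwQuad_le α₂ β₂)).comp (hc.prodMk hu)
  have hL := (continuous_integral_comp_add_inner hP hL2 (continuous_pwLin α β)
    (abs_pwLin_le α β)).comp (hc.prodMk hu)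
  exact (hQ.sub (hL.pow 2)).add (hκ.mul hL)

lemma meanVarObjective_zero_zero_pos [IsProbabilityMeasure μ] (hP : Measurable P)
    (hL2 : Integrable (fun ω => ‖P ω‖ ^ 2) μ) (hαβ : (α, β) ≠ (0, 0))
    (hα : α ^ 2 ≤ α₂) (hβ : β ^ 2 ≤ β₂) {v : E}
    (hpos : 0 < μ {ω | 0 < ⟪P ω, v⟫}) (hneg : 0 < μ {ω | ⟪P ω, v⟫ < 0})
    (hatom : ∀ c, μ {ω | ⟪P ω, v⟫ = c} = 0) :
    0 < meanVarObjective μ P α β α₂ β₂ 0 0 v := by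
  have hL2' : Integrable (fun ω => pwLin α β (0 + ⟪P ω, v⟫) ^ 2) μ := by
    simpa only [sq_pwLin] using integrable_pwQuad_add_inner hP hL2 (α ^ 2) (β ^ 2) 0 v
  have hQ := integrable_pwQuad_add_inner hP hL2 α₂ β₂ 0 v
  have hmem : MemLp (fun ω => pwLin α β (0 + ⟪P ω, v⟫)) 2 μ :=
    (memLp_two_iff_integrable_sq_norm (measurable_comp_add_inner hP
      (continuous_pwLin α β).measurable 0 v).aestronglyMeasurable).2 (by simpa using hL2')
  have hvar := variance_pwLin_pos hαβ hmem (by simpa using hpos.ne') (by simpa using hneg.ne')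
    (by simpa using hatom)
  rw [ProbabilityTheory.variance_eq_sub hmem] at hvar
  refine hvar.trans_le ?_
  simp only [meanVarObjective, zero_mul, add_zero]
  exact sub_le_sub_right
    (integral_mono hL2' hQ fun ω => (sq_pwLin α β _).trans_le (pwQuad_mono hα hβ _)) _

theorem tendsto_meanVarObjective_cocompact [IsProbabilityMeasure μ] [FiniteDimensional ℝ E]
    (hP : Measurable P) (hL2 : Integrable (fun ω => ‖P ω‖ ^ 2) μ) (hαβ : (α, β) ≠ (0, 0))
    (hα : α ^ 2 ≤ α₂) (hβ : β ^ 2 ≤ β₂)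
    (htwosided : ∀ v : E, v ≠ 0 → 0 < μ {ω | 0 < ⟪P ω, v⟫} ∧ 0 < μ {ω | ⟪P ω, v⟫ < 0})
    (hatomless : ∀ v : E, v ≠ 0 → ∀ c, μ {ω | ⟪P ω, v⟫ = c} = 0) (c κ : ℝ) :
    Tendsto (meanVarObjective μ P α β α₂ β₂ c κ) (cocompact E) atTop := by
  refine tendsto_cocompact_atTop_of_perspective
    (fun r v => meanVarObjective μ P α β α₂ β₂ (r * c) (r * κ) v)
    (continuous_meanVarObjective hP hL2 (by fun_prop) (by fun_prop) continuous_snd)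
    (fun v hv => ?_) (fun t ht v => meanVarObjective_smul μ P α β α₂ β₂ ht c κ v)
  have hv0 : v ≠ 0 := by rintro rfl; simp at hv
  simpa using meanVarObjective_zero_zero_pos hP hL2 hαβ hα hβ (htwosided v hv0).1
    (htwosided v hv0).2 (hatomless v hv0)

end MeanVariance

lemma mul_nonneg_iff_of_neg_left {c b : ℝ} (hc : c < 0) : 0 ≤ c * b ↔ b ≤ 0 :=
  ⟨fun h => by nlinarith, mul_nonneg_of_nonpos_of_nonpos hc.le⟩

lemma mul_neg_iff_of_neg_left {c b : ℝ} (hc : c < 0) : c * b < 0 ↔ 0 < b :=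
  ⟨fun h => by nlinarith, mul_neg_of_neg_of_pos hc⟩

section Model

variable {Ω : Type*} {n : ℕ} (P : Ω → EuclideanSpace ℝ (Fin n))
  (s ρ' ap am bp bm Y : ℝ)

lemma mRV_eq_pwLin (u : EuclideanSpace ℝ (Fin n)) (ω : Ω) :
    mRV P s ρ' ap am Y u ω = pwLin (ρ' + ap) (ρ' + am) (s * Y + ⟪P ω, u⟫) := by
  simp only [mRV]
  generalize s * Y + ⟪P ω, u⟫ = t
  rcases le_or_gt 0 t with ht | ht
  · simp only [ht, not_lt.2 ht, if_true, if_false, pwLin_of_nonneg]; ring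
  · simp only [ht, not_le.2 ht, if_true, if_false, pwLin_of_nonpos ht.le]; ring

lemma qRV_eq_pwQuad (u : EuclideanSpace ℝ (Fin n)) (ω : Ω) :
    qRV P s ρ' ap am bp bm Y u ω =
      pwQuad (ρ' ^ 2 + (2 * ρ' * ap + bp)) (ρ' ^ 2 + (2 * ρ' * am + bm)) (s * Y + ⟪P ω, u⟫) := by
  simp only [qRV]
  generalize s * Y + ⟪P ω, u⟫ = t
  rcases le_or_gt 0 t with ht | ht
  · simp only [ht, not_lt.2 ht, if_true, if_false, pwQuad_of_nonneg]; ring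
  · simp only [ht, not_le.2 ht, if_true, if_false, pwQuad_of_nonpos ht.le]; ring

variable {s ρ' ap am bp bm Y}

lemma mRV_smul_of_neg (hY : Y < 0) (K : EuclideanSpace ℝ (Fin n)) (ω : Ω) :
    mRV P s ρ' ap am Y (Y • K) ω =
      Y * (ρ' * (s + ⟪P ω, K⟫) +
        (ap * (s + ⟪P ω, K⟫) * (if s + ⟪P ω, K⟫ ≤ 0 then 1 else 0) +
          am * (s + ⟪P ω, K⟫) * (if 0 < s + ⟪P ω, K⟫ then 1 else 0))) := by
  have h : s * Y + ⟪P ω, Y • K⟫ = Y * (s + ⟪P ω, K⟫) := by rw [real_inner_smul_right]; ring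
  simp only [mRV, h, mul_nonneg_iff_of_neg_left hY, mul_neg_iff_of_neg_left hY]
  ring

lemma qRV_smul_of_neg (hY : Y < 0) (K : EuclideanSpace ℝ (Fin n)) (ω : Ω) :
    qRV P s ρ' ap am bp bm Y (Y • K) ω =
      Y ^ 2 * (ρ' ^ 2 * (s + ⟪P ω, K⟫) ^ 2 +
        ((2 * ρ' * ap + bp) * (s + ⟪P ω, K⟫) ^ 2 * (if s + ⟪P ω, K⟫ ≤ 0 then 1 else 0) +
          (2 * ρ' * am + bm) * (s + ⟪P ω, K⟫) ^ 2 * (if 0 < s + ⟪P ω, K⟫ then 1 else 0))) := by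
  have h : s * Y + ⟪P ω, Y • K⟫ = Y * (s + ⟪P ω, K⟫) := by rw [real_inner_smul_right]; ring
  simp only [qRV, h, mul_nonneg_iff_of_neg_left hY, mul_neg_iff_of_neg_left hY]
  ring

end Model

section FminusIdentity

variable {Ω : Type*} [MeasurableSpace Ω] {μ : Measure Ω} [IsProbabilityMeasure μ] {n : ℕ}
  {P : Ω → EuclideanSpace ℝ (Fin n)} {s ρ' ap am bp bm Y : ℝ}

lemma integral_inner_add_sq (hP : Measurable P) (hL2 : Integrable (fun ω => ‖P ω‖ ^ 2) μ)
    (s : ℝ) (K : EuclideanSpace ℝ (Fin n)) :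
    ∫ ω, (s + ⟪P ω, K⟫) ^ 2 ∂μ = s ^ 2 + 2 * s * (∫ ω, ⟪P ω, K⟫ ∂μ) + ∫ ω, ⟪P ω, K⟫ ^ 2 ∂μ := by
  have hX := integrable_inner_const hP hL2 K
  have hX2 : Integrable (fun ω => ⟪P ω, K⟫ ^ 2) μ := by
    simpa only [pwQuad_one_one, zero_add] using integrable_pwQuad_add_inner hP hL2 1 1 0 K
  simp only [add_sq]
  rw [integral_add ((integrable_const _).fun_add (hX.const_mul _)) hX2,
    integral_add (integrable_const _) (hX.const_mul _), integral_const, integral_const_mul]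
  simp

lemma integral_mRV_smul_of_neg (hP : Measurable P) (hL2 : Integrable (fun ω => ‖P ω‖ ^ 2) μ)
    (hY : Y < 0) (K : EuclideanSpace ℝ (Fin n)) :
    ∫ ω, mRV P s ρ' ap am Y (Y • K) ω ∂μ =
      Y * (ρ' * (s + ∫ ω, ⟪P ω, K⟫ ∂μ) +
        ((∫ ω, ap * (s + ⟪P ω, K⟫) * (if s + ⟪P ω, K⟫ ≤ 0 then 1 else 0) ∂μ) +
          ∫ ω, am * (s + ⟪P ω, K⟫) * (if 0 < s + ⟪P ω, K⟫ then 1 else 0) ∂μ)) := by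
  have hX := integrable_inner_const hP hL2 K
  have h₁ : Integrable (fun ω => ap * (s + ⟪P ω, K⟫) * (if s + ⟪P ω, K⟫ ≤ 0 then 1 else 0)) μ := by
    simpa only [mul_ite_nonpos_eq_pwLin] using integrable_pwLin_add_inner hP hL2 0 ap s K
  have h₂ : Integrable (fun ω => am * (s + ⟪P ω, K⟫) * (if 0 < s + ⟪P ω, K⟫ then 1 else 0)) μ := by
    simpa only [mul_ite_pos_eq_pwLin] using integrable_pwLin_add_inner hP hL2 am 0 s K
  simp only [mRV_smul_of_neg P hY K]
  rw [integral_const_mul,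
    integral_add (((integrable_const s).fun_add hX).const_mul ρ') (h₁.fun_add h₂),
    integral_const_mul, integral_add (integrable_const s) hX, integral_add h₁ h₂]
  simp

lemma integral_qRV_smul_of_neg (hP : Measurable P) (hL2 : Integrable (fun ω => ‖P ω‖ ^ 2) μ)
    (hY : Y < 0) (K : EuclideanSpace ℝ (Fin n)) :
    ∫ ω, qRV P s ρ' ap am bp bm Y (Y • K) ω ∂μ =
      Y ^ 2 * (ρ' ^ 2 * (∫ ω, (s + ⟪P ω, K⟫) ^ 2 ∂μ) +
        ((∫ ω, (2 * ρ' * ap + bp) * (s + ⟪P ω, K⟫) ^ 2 *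
            (if s + ⟪P ω, K⟫ ≤ 0 then 1 else 0) ∂μ) +
          ∫ ω, (2 * ρ' * am + bm) * (s + ⟪P ω, K⟫) ^ 2 *
            (if 0 < s + ⟪P ω, K⟫ then 1 else 0) ∂μ)) := by
  have hZ2 : Integrable (fun ω => (s + ⟪P ω, K⟫) ^ 2) μ := by
    simpa only [pwQuad_one_one] using integrable_pwQuad_add_inner hP hL2 1 1 s K
  have h₁ : Integrable (fun ω => (2 * ρ' * ap + bp) * (s + ⟪P ω, K⟫) ^ 2 *
      (if s + ⟪P ω, K⟫ ≤ 0 then 1 else 0)) μ := by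
    simpa only [mul_sq_ite_nonpos_eq_pwQuad] using integrable_pwQuad_add_inner hP hL2 0 _ s K
  have h₂ : Integrable (fun ω => (2 * ρ' * am + bm) * (s + ⟪P ω, K⟫) ^ 2 *
      (if 0 < s + ⟪P ω, K⟫ then 1 else 0)) μ := by
    simpa only [mul_sq_ite_pos_eq_pwQuad] using integrable_pwQuad_add_inner hP hL2 _ 0 s K
  simp only [qRV_smul_of_neg P hY K]
  rw [integral_const_mul, integral_add (hZ2.const_mul _) (h₁.fun_add h₂), integral_const_mul,
    integral_add h₁ h₂]

theorem meanVar_smul_eq_sq_mul_Fminus (γm : ℝ) (hP : Measurable P)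
    (hL2 : Integrable (fun ω => ‖P ω‖ ^ 2) μ) (hY : Y < 0) (K : EuclideanSpace ℝ (Fin n)) :
    (∫ ω, qRV P s ρ' ap am bp bm Y (Y • K) ω ∂μ) - (∫ ω, mRV P s ρ' ap am Y (Y • K) ω ∂μ) ^ 2 +
        γm * Y * (∫ ω, mRV P s ρ' ap am Y (Y • K) ω ∂μ) =
      Y ^ 2 * Fminus μ P s ρ' γm ap am bp bm K := by
  rw [integral_mRV_smul_of_neg hP hL2 hY K, integral_qRV_smul_of_neg hP hL2 hY K,
    integral_inner_add_sq hP hL2 s K]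
  simp only [Fminus]
  ring

end FminusIdentity

section Cone

variable {ι κ : Type*} [Fintype κ] (M : Matrix ι κ ℝ)

lemma smul_mem_setOf_sum_mul_nonneg_iff {t : ℝ} (ht : 0 < t) (u : EuclideanSpace ℝ κ) :
    (∀ i, 0 ≤ ∑ j, M i j * (t • u) j) ↔ ∀ i, 0 ≤ ∑ j, M i j * u j := by
  have h : ∀ i, ∑ j, M i j * (t • u) j = t * ∑ j, M i j * u j := fun i => by
    rw [Finset.mul_sum]
    exact Finset.sum_congr rfl fun j _ => by simp only [PiLp.smul_apply, smul_eq_mul]; ring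
  simp only [h, mul_nonneg_iff_of_pos_left ht]

lemma isClosed_setOf_sum_mul_nonneg :
    IsClosed {u : EuclideanSpace ℝ κ | ∀ i, 0 ≤ ∑ j, M i j * u j} := by
  simp only [ofPred_forall]
  exact isClosed_iInter fun i => isClosed_le continuous_const (by fun_prop)

end Cone

lemma isMinOn_iff_isMinOn_inv_smul {E : Type*} [AddCommGroup E] [Module ℝ E] {J F : E → ℝ}
    {A B : Set E} {Y : ℝ} (hY : Y ≠ 0) (hAB : ∀ u, u ∈ A ↔ Y⁻¹ • u ∈ B)
    (hJF : ∀ K, J (Y • K) = Y ^ 2 * F K) (u : E) :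
    IsMinOn J A u ↔ IsMinOn F B (Y⁻¹ • u) := by
  have hJ : ∀ v, J v = Y ^ 2 * F (Y⁻¹ • v) := fun v => by rw [← hJF, smul_inv_smul₀ hY]
  have hY2 : 0 < Y ^ 2 := by positivity
  simp only [isMinOn_iff, hJ, mul_le_mul_iff_right₀ hY2]
  refine ⟨fun h K hK => ?_, fun h v hv => h _ ((hAB v).1 hv)⟩
  simpa [inv_smul_smul₀ hY] using h (Y • K) ((hAB _).2 (by rwa [inv_smul_smul₀ hY]))

theorem J_min_iff_Fminus_min_cone_general {Ω : Type*} [MeasurableSpace Ω] (ℙ : Measure Ω)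
    [IsProbabilityMeasure ℙ] {n : ℕ}
    (P : Ω → EuclideanSpace ℝ (Fin n)) (hmeas : Measurable P)
    (hL2 : Integrable (fun ω => ‖P ω‖ ^ 2) ℙ)
    (s ρ' γm ap am bp bm : ℝ)
    (htwosided : ∀ L : EuclideanSpace ℝ (Fin n), L ≠ 0 →
      0 < ℙ {ω | 0 < (inner ℝ (P ω) L : ℝ)} ∧ 0 < ℙ {ω | (inner ℝ (P ω) L : ℝ) < 0})
    (hatomless : ∀ L : EuclideanSpace ℝ (Fin n), L ≠ 0 →
      ∀ c : ℝ, ℙ {ω | (inner ℝ (P ω) L : ℝ) = c} = 0)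
    (hbp : ap ^ 2 ≤ bp) (hbm : am ^ 2 ≤ bm)
    (hne : (ρ' + ap, ρ' + am) ≠ ((0 : ℝ), (0 : ℝ)))
    (m : ℕ) (M : Matrix (Fin m) (Fin n) ℝ)
    (Y : ℝ) (hY : Y < 0) :
    let A : Set (EuclideanSpace ℝ (Fin n)) :=
      {u | ∀ i : Fin m, 0 ≤ ∑ j : Fin n, M i j * u j}
    let negA : Set (EuclideanSpace ℝ (Fin n)) := {u | -u ∈ A}
    let J : EuclideanSpace ℝ (Fin n) → ℝ := fun u =>
      (∫ ω, qRV P s ρ' ap am bp bm Y u ω ∂ℙ) -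
        (∫ ω, mRV P s ρ' ap am Y u ω ∂ℙ) ^ 2 +
        γm * Y * (∫ ω, mRV P s ρ' ap am Y u ω ∂ℙ)
    let F : EuclideanSpace ℝ (Fin n) → ℝ := Fminus ℙ P s ρ' γm ap am bp bm
    (∀ u : EuclideanSpace ℝ (Fin n), u ∈ A ↔ (1 / Y) • u ∈ negA) ∧
      (∃ ustar ∈ A, ∀ u ∈ A, J ustar ≤ J u) ∧
      (∀ ustar ∈ A,
        ((∀ u ∈ A, J ustar ≤ J u) ↔
          ((1 / Y) • ustar ∈ negA ∧ ∀ K ∈ negA, F ((1 / Y) • ustar) ≤ F K))) ∧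
      (∀ ustar ∈ A, ∀ Kstar ∈ negA,
        (∀ u ∈ A, J ustar ≤ J u) → (∀ K ∈ negA, F Kstar ≤ F K) →
          J ustar = Y ^ 2 * F Kstar) := by
  intro A negA J F
  have hmem : ∀ u, u ∈ A ↔ (1 / Y) • u ∈ negA := fun u =>
    (smul_mem_setOf_sum_mul_nonneg_iff M (neg_pos.2 (one_div_neg.2 hY)) u).symm.trans
      (by simp only [neg_smul]; exact Iff.rfl)
  have hJF : ∀ K, J (Y • K) = Y ^ 2 * F K := meanVar_smul_eq_sq_mul_Fminus γm hmeas hL2 hY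
  have hmin : ∀ u, IsMinOn J A u ↔ IsMinOn F negA ((1 / Y) • u) := by
    simpa only [one_div] using
      isMinOn_iff_isMinOn_inv_smul hY.ne (by simpa only [one_div] using hmem) hJF
  have hJ : J = meanVarObjective ℙ P (ρ' + ap) (ρ' + am) (ρ' ^ 2 + (2 * ρ' * ap + bp))
      (ρ' ^ 2 + (2 * ρ' * am + bm)) (s * Y) (γm * Y) := by
    funext u
    simp only [J, meanVarObjective, mRV_eq_pwLin, qRV_eq_pwQuad]
  have hJtop : Tendsto J (cocompact _) atTop := hJ ▸ tendsto_meanVarObjective_cocompact hmeas hL2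
    hne (by linarith [add_sq ρ' ap]) (by linarith [add_sq ρ' am]) htwosided hatomless _ _
  have hJcont : Continuous J := hJ ▸ continuous_meanVarObjective hmeas hL2 continuous_const
    continuous_const continuous_id
  obtain ⟨u₀, hu₀, hu₀min⟩ := hJcont.continuousOn.exists_isMinOn'
    (isClosed_setOf_sum_mul_nonneg M) (x₀ := 0) (by simp)
    ((hJtop.eventually_ge_atTop (J 0)).filter_mono inf_le_left)
  refine ⟨hmem, ⟨u₀, hu₀, hu₀min⟩, fun u hu => ?_, fun u hu K hK huMin hKmin => ?_⟩
  · rw [← isMinOn_iff, hmin, isMinOn_iff]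
    exact ⟨fun h => ⟨(hmem u).1 hu, h⟩, And.right⟩
  · have hJu : J u = Y ^ 2 * F ((1 / Y) • u) := by
      rw [← hJF, smul_smul, mul_one_div_cancel hY.ne, one_smul]
    rw [hJu, le_antisymm ((hmin u).1 huMin hK) (hKmin _ ((hmem u).1 hu))]

/-- Cone-constrained version for `Y < 0`: with `𝒜 = {u : Mu ≥ 0 componentwise}`,
`−𝒜 = {−u : u ∈ 𝒜}` and `J(u) = E[q] − (E[m])² + γ⁻Y·E[m]`: `u ∈ 𝒜 ↔ u/Y ∈ −𝒜`;
`J` attains its minimum over `𝒜`; `u* ∈ 𝒜` minimizes `J` over `𝒜` iff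
`K* = u*/Y` minimizes `F⁻` over `−𝒜`; and the minimum of `J` over `𝒜` equals
`Y²` times the minimum of `F⁻` over `−𝒜`. -/
theorem J_min_iff_Fminus_min_cone {Ω : Type*} [MeasurableSpace Ω] (ℙ : Measure Ω)
    [IsProbabilityMeasure ℙ] {n : ℕ} (hn : 1 ≤ n)
    (P : Ω → EuclideanSpace ℝ (Fin n)) (hmeas : Measurable P)
    (hL2 : Integrable (fun ω => ‖P ω‖ ^ 2) ℙ)
    (s ρ' γm ap am bp bm : ℝ) (hs : 0 < s) (hρ : 0 < ρ')
    (htwosided : ∀ L : EuclideanSpace ℝ (Fin n), L ≠ 0 →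
      0 < ℙ {ω | 0 < (inner ℝ (P ω) L : ℝ)} ∧ 0 < ℙ {ω | (inner ℝ (P ω) L : ℝ) < 0})
    (hatomless : ∀ L : EuclideanSpace ℝ (Fin n), L ≠ 0 →
      ∀ c : ℝ, ℙ {ω | (inner ℝ (P ω) L : ℝ) = c} = 0)
    (hbp : ap ^ 2 ≤ bp) (hbm : am ^ 2 ≤ bm)
    (hne : (ρ' + ap, ρ' + am) ≠ ((0 : ℝ), (0 : ℝ)))
    (m : ℕ) (M : Matrix (Fin m) (Fin n) ℝ)
    (Y : ℝ) (hY : Y < 0) :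
    let A : Set (EuclideanSpace ℝ (Fin n)) :=
      {u | ∀ i : Fin m, 0 ≤ ∑ j : Fin n, M i j * u j}
    let negA : Set (EuclideanSpace ℝ (Fin n)) := {u | -u ∈ A}
    let J : EuclideanSpace ℝ (Fin n) → ℝ := fun u =>
      (∫ ω, qRV P s ρ' ap am bp bm Y u ω ∂ℙ) -
        (∫ ω, mRV P s ρ' ap am Y u ω ∂ℙ) ^ 2 +
        γm * Y * (∫ ω, mRV P s ρ' ap am Y u ω ∂ℙ)
    let F : EuclideanSpace ℝ (Fin n) → ℝ := Fminus ℙ P s ρ' γm ap am bp bm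
    (∀ u : EuclideanSpace ℝ (Fin n), u ∈ A ↔ (1 / Y) • u ∈ negA) ∧
      (∃ ustar ∈ A, ∀ u ∈ A, J ustar ≤ J u) ∧
      (∀ ustar ∈ A,
        ((∀ u ∈ A, J ustar ≤ J u) ↔
          ((1 / Y) • ustar ∈ negA ∧ ∀ K ∈ negA, F ((1 / Y) • ustar) ≤ F K))) ∧
      (∀ ustar ∈ A, ∀ Kstar ∈ negA,
        (∀ u ∈ A, J ustar ≤ J u) → (∀ K ∈ negA, F Kstar ≤ F K) →
          J ustar = Y ^ 2 * F Kstar) :=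
  J_min_iff_Fminus_min_cone_general ℙ P hmeas hL2 s ρ' γm ap am bp bm htwosided hatomless hbp hbm
    hne m M Y hY
end
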